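/- arXiv:1411.7429 — 3 statements merged into one kernel-verified Lean document; each statement's English description precedes it below -/
import Mathlib

section
/- Let k ≥ 2 be an integer and let i, j be integers with 0 ≤ i ≤ k and 0 ≤ j ≤ k. Then sin(π(i+1)/(k+2)) · sin(π(j+1)/(k+2)) = sin(π/(k+2)) · Σ_{c ∈ S(i,j,k)} sin(π(c+1)/(k+2)). -/
/-!
With `θ = π / (k + 2)`, the product-to-sum formula turns `2 sin θ sin ((c + 1) θ)` into
`cos (c θ) - cos ((c + 2) θ)`, so the sum over `c = d, d + 2, …, m` telescopes to
`cos (d θ) - cos ((m + 2) θ)`, while `2 sin ((i + 1) θ) sin ((j + 1) θ) = cos ((i - j) θ) - cos ((i + j + 2) θ)`.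
Here `d = |i - j|` and `m = min (i + j) (2k - i - j)`; the two cutoffs give the same cosine
because `(2k - i - j + 2) θ = 2π - (i + j + 2) θ`.
-/

open Real Finset

theorem two_mul_sin_mul_sum_sin_arith (θ a : ℝ) (n : ℕ) :
    2 * sin θ * ∑ t ∈ range n, sin ((a + 2 * t + 1) * θ) =
      cos (a * θ) - cos ((a + 2 * n) * θ) := by
  have hstep : ∀ t : ℕ, 2 * sin θ * sin ((a + 2 * t + 1) * θ) =
      cos ((a + 2 * t) * θ) - cos ((a + 2 * (t + 1 : ℕ)) * θ) := by
    intro t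
    rw [two_mul_sin_mul_sin, ← cos_neg]
    push_cast
    ring_nf
  rw [mul_sum]
  simp only [hstep]
  simpa using sum_range_sub' (fun t : ℕ => cos ((a + 2 * t) * θ)) n

theorem filter_Icc_even_sub_eq_image (a : ℤ) (n : ℕ) :
    (Icc a (a + 2 * n)).filter (fun c => Even (c - a)) =
      (range (n + 1)).image (fun t : ℕ => a + 2 * (t : ℤ)) := by
  ext c
  simp only [mem_filter, mem_Icc, mem_image, mem_range, Int.even_iff]
  constructor
  · rintro ⟨⟨hac, hcb⟩, hev⟩
    exact ⟨((c - a) / 2).toNat, by omega, by omega⟩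
  · rintro ⟨t, ht, rfl⟩
    omega

theorem two_mul_sin_mul_sum_sin_filter_even (θ : ℝ) {a b : ℤ} (hab : a ≤ b) (hev : Even (b - a)) :
    2 * sin θ * ∑ c ∈ (Icc a b).filter (fun c => Even (c - a)), sin ((c + 1) * θ) =
      cos (a * θ) - cos ((b + 2) * θ) := by
  obtain ⟨r, hr⟩ := hev
  lift r to ℕ using by omega
  obtain rfl : b = a + 2 * r := by omega
  rw [filter_Icc_even_sub_eq_image, sum_image (fun s _ t _ h => by simpa using h)]
  push_cast
  rw [two_mul_sin_mul_sum_sin_arith]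
  push_cast
  ring_nf

theorem filter_fusion_eq (k i j : ℤ) :
    (Icc |i - j| (i + j)).filter (fun c => Even (i + j + c) ∧ i + j + c ≤ 2 * k) =
      (Icc |i - j| (min (i + j) (2 * k - i - j))).filter (fun c => Even (c - |i - j|)) := by
  ext c
  simp only [mem_filter, mem_Icc, le_min_iff, Int.even_iff]
  rcases abs_cases (i - j) with ⟨h, _⟩ | ⟨h, _⟩ <;> omega

theorem cos_two_mul_sub_mul_pi_div {n : ℝ} (hn : n ≠ 0) (x : ℝ) :
    cos ((2 * n - x) * (π / n)) = cos (x * (π / n)) := by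
  rw [← cos_two_pi_sub]
  congr 1
  field_simp
  ring

theorem stmt_0_general (k i j : ℤ) (hi0 : 0 ≤ i) (hik : i ≤ k)
    (hj0 : 0 ≤ j) (hjk : j ≤ k) :
    Real.sin (π * (i + 1) / (k + 2)) * Real.sin (π * (j + 1) / (k + 2)) =
      Real.sin (π / (k + 2)) *
        ∑ c ∈ (Finset.Icc (|i - j|) (i + j)).filter
            (fun c => Even (i + j + c) ∧ i + j + c ≤ 2 * k),
          Real.sin (π * (c + 1) / (k + 2)) := by
  have hk : (k : ℝ) + 2 ≠ 0 := by
    have : (0 : ℝ) ≤ k := by exact_mod_cast hi0.trans hik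
    positivity
  have hθ (x : ℝ) : π * (x + 1) / (k + 2) = (x + 1) * (π / (k + 2)) := by ring
  simp only [hθ]
  set θ := π / (k + 2)
  rw [filter_fusion_eq]
  have hle : |i - j| ≤ min (i + j) (2 * k - i - j) := by
    rw [le_min_iff]
    rcases abs_cases (i - j) with ⟨h, _⟩ | ⟨h, _⟩ <;> omega
  have hev : Even (min (i + j) (2 * k - i - j) - |i - j|) := by
    rw [Int.even_iff]
    rcases abs_cases (i - j) with ⟨h, _⟩ | ⟨h, _⟩ <;> omega
  have hsum := two_mul_sin_mul_sum_sin_filter_even θ hle hev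
  have hlow : cos ((|i - j| : ℤ) * θ) = cos (((i : ℝ) + 1) * θ - ((j : ℝ) + 1) * θ) := by
    rcases abs_choice (i - j) with h | h <;> rw [h] <;> push_cast
    · ring_nf
    · rw [← cos_neg]; ring_nf
  have hhigh : cos (((min (i + j) (2 * k - i - j) : ℤ) + 2) * θ) =
      cos (((i : ℝ) + 1) * θ + ((j : ℝ) + 1) * θ) := by
    rcases min_choice (i + j) (2 * k - i - j) with h | h <;> rw [h] <;> push_cast
    · ring_nf
    · convert cos_two_mul_sub_mul_pi_div hk ((i : ℝ) + j + 2) using 2 <;> ring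
  rw [hlow, hhigh, ← two_mul_sin_mul_sin] at hsum
  linear_combination -hsum / 2

/-- For integers `k ≥ 2` and `0 ≤ i, j ≤ k`, the quantum-dimension multiplicativity
identity: `sin(π(i+1)/(k+2)) · sin(π(j+1)/(k+2)) = sin(π/(k+2)) · Σ_{c ∈ S(i,j,k)}
sin(π(c+1)/(k+2))`, where `S(i,j,k)` is the set of integers `c` with
`|i−j| ≤ c ≤ i+j`, `i+j+c` even, and `i+j+c ≤ 2k`. -/
theorem stmt_0 (k i j : ℤ) (hk : 2 ≤ k) (hi0 : 0 ≤ i) (hik : i ≤ k)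
    (hj0 : 0 ≤ j) (hjk : j ≤ k) :
    Real.sin (π * (i + 1) / (k + 2)) * Real.sin (π * (j + 1) / (k + 2)) =
      Real.sin (π / (k + 2)) *
        ∑ c ∈ (Finset.Icc (|i - j|) (i + j)).filter
            (fun c => Even (i + j + c) ∧ i + j + c ≤ 2 * k),
          Real.sin (π * (c + 1) / (k + 2)) :=
  stmt_0_general k i j hi0 hik hj0 hjk
end

section
/- Let k ≥ 2 be an integer and let i, j be integers with 0 ≤ i ≤ k and 0 ≤ j ≤ k. Then cos(π(i+j+2)/(k+2)) − cos(π(i−j)/(k+2)) = Σ_{c ∈ S(i,j,k)} ( cos(π(c+2)/(k+2)) − cos(π c/(k+2)) ). -/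
open Real Finset

/-! Writing `a = |i - j|` and `b = min (i + j) (2k - i - j)`, the index set `S(i,j,k)` is the
progression `a, a + 2, …, b`, so the right-hand side telescopes to
`cos(π(b+2)/(k+2)) − cos(πa/(k+2))`. The cosine is even, which handles `a`, and
`cos(π(2(k+2) − t)/(k+2)) = cos(πt/(k+2))`, which handles `b = 2k − i − j`. -/

theorem sum_Icc_filter_even_sub_add_two_sub {M : Type*} [AddCommGroup M] (f : ℤ → M)
    (a : ℤ) (n : ℕ) :
    ∑ c ∈ (Icc a (a + 2 * n)).filter (fun c => Even (c - a)), (f (c + 2) - f c) =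
      f (a + 2 * n + 2) - f a := by
  induction n with
  | zero =>
    have h : (Icc a a).filter (fun c => Even (c - a)) = {a} := by
      simp
    simp only [Nat.cast_zero, mul_zero, add_zero]
    rw [h, sum_singleton]
  | succ n ih =>
    have h : (Icc a (a + 2 * (n + 1 : ℕ))).filter (fun c => Even (c - a)) =
        insert (a + 2 * n + 2) ((Icc a (a + 2 * n)).filter (fun c => Even (c - a))) := by
      ext c
      simp only [mem_filter, mem_Icc, mem_insert, Int.even_iff]
      omega
    rw [h, sum_insert (by simp), ih, show a + 2 * (n + 1 : ℕ) + 2 = a + 2 * n + 2 + 2 by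
      push_cast; ring]
    abel

theorem Real.cos_pi_mul_two_mul_sub_div {n : ℝ} (hn : n ≠ 0) (t : ℝ) :
    cos (π * (2 * n - t) / n) = cos (π * t / n) := by
  rw [← cos_two_pi_sub]
  congr 1
  field_simp
  ring

theorem Real.cos_pi_mul_abs_div (x y : ℝ) : cos (π * |x| / y) = cos (π * x / y) := by
  rcases abs_cases x with ⟨hx, -⟩ | ⟨hx, -⟩
  · rw [hx]
  · rw [hx, ← cos_neg]
    ring_nf

theorem stmt_1_general (k i j : ℤ) (hi0 : 0 ≤ i) (hik : i ≤ k)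
    (hj0 : 0 ≤ j) (hjk : j ≤ k) :
    Real.cos (π * (i + j + 2) / (k + 2)) - Real.cos (π * (i - j) / (k + 2)) =
      ∑ c ∈ (Finset.Icc (|i - j|) (i + j)).filter
          (fun c => Even (i + j + c) ∧ i + j + c ≤ 2 * k),
        (Real.cos (π * (c + 2) / (k + 2)) - Real.cos (π * c / (k + 2))) := by
  set a := |i - j|
  set n := ((min (i + j) (2 * k - i - j) - a) / 2).toNat
  have ha : a = i - j ∨ a = j - i := by
    rcases abs_cases (i - j) with ⟨h, -⟩ | ⟨h, -⟩ <;> omega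
  have hS : (Icc a (i + j)).filter (fun c => Even (i + j + c) ∧ i + j + c ≤ 2 * k) =
      (Icc a (a + 2 * n)).filter (fun c => Even (c - a)) := by
    ext c
    simp only [mem_filter, mem_Icc, Int.even_iff, n]
    omega
  have hk : (k : ℝ) + 2 ≠ 0 := by
    have : (0 : ℝ) ≤ k := by exact_mod_cast hi0.trans hik
    positivity
  have hb : cos (π * ((a + 2 * n : ℤ) + 2) / (k + 2)) = cos (π * (i + j + 2) / (k + 2)) := by
    rcases le_total (i + j) (2 * k - i - j) with h | h
    · rw [show a + 2 * n = i + j by omega]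
      push_cast; ring_nf
    · rw [show a + 2 * n = 2 * k - i - j by omega, ← cos_pi_mul_two_mul_sub_div hk]
      push_cast; ring_nf
  have htel := sum_Icc_filter_even_sub_add_two_sub (fun c : ℤ => cos (π * c / (k + 2))) a n
  simp only [Int.cast_add, Int.cast_ofNat] at htel hb
  rw [hS, htel, hb, Int.cast_abs, Int.cast_sub, cos_pi_mul_abs_div]

/-- For integers `k ≥ 2` and `0 ≤ i, j ≤ k`, the cosine identity (4.2):
`cos(π(i+j+2)/(k+2)) − cos(π(i−j)/(k+2)) = Σ_{c ∈ S(i,j,k)}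
(cos(π(c+2)/(k+2)) − cos(π c/(k+2)))`, where `S(i,j,k)` is the set of integers `c`
with `|i−j| ≤ c ≤ i+j`, `i+j+c` even, and `i+j+c ≤ 2k`. -/
theorem stmt_1 (k i j : ℤ) (hk : 2 ≤ k) (hi0 : 0 ≤ i) (hik : i ≤ k)
    (hj0 : 0 ≤ j) (hjk : j ≤ k) :
    Real.cos (π * (i + j + 2) / (k + 2)) - Real.cos (π * (i - j) / (k + 2)) =
      ∑ c ∈ (Finset.Icc (|i - j|) (i + j)).filter
          (fun c => Even (i + j + c) ∧ i + j + c ≤ 2 * k),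
        (Real.cos (π * (c + 2) / (k + 2)) - Real.cos (π * c / (k + 2))) :=
  stmt_1_general k i j hi0 hik hj0 hjk
end

section
/- Let k ≥ 2 be an integer, let i, j be integers with 0 ≤ i ≤ k, 0 ≤ j ≤ k and i+j ≥ k, and set θ = π/(k+2). Then sin((i+1)θ) · sin((j+1)θ) = sin(θ) · Σ_{t=0}^{N} sin(( |i−j| + 2t + 1 )θ), where N = (2k − i − j − |i−j|)/2 (note that 2k − i − j − |i−j| is an even nonnegative integer). -/
open Real Finset

lemma sin_mul_sin' (x y : ℝ) :
    Real.sin x * Real.sin y = (Real.cos (y - x) - Real.cos (x + y)) / 2 := by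
  rw [Real.cos_sub, Real.cos_add]; ring

lemma teleN (m θ : ℝ) (n : ℕ) :
    Real.sin θ * ∑ t ∈ Finset.range (n + 1), Real.sin ((m + 2 * t + 1) * θ) =
      (Real.cos (m * θ) - Real.cos ((m + 2 * n + 2) * θ)) / 2 := by
  induction n with
  | zero => rw [Finset.sum_range_one, sin_mul_sin']; push_cast; ring_nf
  | succ n ih =>
      rw [Finset.sum_range_succ, mul_add, ih, sin_mul_sin']
      push_cast
      ring_nf

lemma tele (m θ : ℝ) (N : ℤ) (hN : 0 ≤ N) :
    Real.sin θ * ∑ t ∈ Finset.Icc (0 : ℤ) N, Real.sin ((m + 2 * t + 1) * θ) =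
      (Real.cos (m * θ) - Real.cos ((m + 2 * N + 2) * θ)) / 2 := by
  have hmap : Finset.Icc (0 : ℤ) N =
      Finset.map ⟨fun n : ℕ => (n : ℤ), Nat.cast_injective⟩ (Finset.range (N.toNat + 1)) := by
    ext x
    simp only [Finset.mem_Icc, Finset.mem_map, Finset.mem_range, Function.Embedding.coeFn_mk]
    constructor
    · rintro ⟨h1, h2⟩; exact ⟨x.toNat, by omega, by omega⟩
    · rintro ⟨a, ha, rfl⟩; omega
  rw [hmap, Finset.sum_map]
  simp only [Function.Embedding.coeFn_mk, Int.cast_natCast]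
  rw [teleN]
  have hcast : ((N.toNat : ℕ) : ℝ) = (N : ℝ) := by exact_mod_cast Int.toNat_of_nonneg hN
  rw [hcast]

/-- For an integer `k ≥ 2`, integers `0 ≤ i, j ≤ k` with `i + j ≥ k`, and
`θ = π/(k+2)`: `sin((i+1)θ) · sin((j+1)θ) = sin θ · Σ_{t=0}^{N} sin((|i−j|+2t+1)θ)`
where `N = (2k − i − j − |i−j|)/2`. -/
theorem stmt_4 (k i j : ℤ) (hk : 2 ≤ k) (hi0 : 0 ≤ i) (hik : i ≤ k)
    (hj0 : 0 ≤ j) (hjk : j ≤ k) (hij : k ≤ i + j) (θ : ℝ)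
    (hθ : θ = π / (k + 2)) :
    Real.sin ((i + 1) * θ) * Real.sin ((j + 1) * θ) =
      Real.sin θ *
        ∑ t ∈ Finset.Icc (0 : ℤ) ((2 * k - i - j - |i - j|) / 2),
          Real.sin ((|(i : ℝ) - j| + 2 * t + 1) * θ) := by
  have habs : |(i : ℝ) - j| = ((|i - j| : ℤ) : ℝ) := by push_cast; ring_nf
  set N : ℤ := (2 * k - i - j - |i - j|) / 2 with hNdef
  have hN0 : 0 ≤ N := by
    rcases abs_cases (i - j) with ⟨h1, h2⟩ | ⟨h1, h2⟩ <;> omega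
  have hNval : |i - j| + 2 * N = 2 * k - i - j := by
    rcases abs_cases (i - j) with ⟨h1, h2⟩ | ⟨h1, h2⟩ <;> omega
  rw [habs, tele _ _ _ hN0]
  have hkθ : ((k : ℝ) + 2) * θ = π := by
    have : (k : ℝ) + 2 ≠ 0 := by positivity
    rw [hθ]; field_simp
  -- rewrite the two cosines
  have h1 : Real.cos (((|i - j| : ℤ) : ℝ) * θ) = Real.cos (((i : ℝ) - j) * θ) := by
    rcases abs_cases (i - j) with ⟨h, _⟩ | ⟨h, _⟩
    · rw [h]; push_cast; ring_nf
    · rw [h]; push_cast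
      rw [show (-((i:ℝ) - j)) * θ = -(((i:ℝ)-j)*θ) by ring, Real.cos_neg]
  have h2 : Real.cos ((((|i - j| : ℤ) : ℝ) + 2 * (N : ℝ) + 2) * θ)
      = Real.cos (((i : ℝ) + j + 2) * θ) := by
    have : (((|i - j| : ℤ) : ℝ) + 2 * (N : ℝ) + 2) * θ
        = 2 * π - ((i : ℝ) + j + 2) * θ := by
      have : ((|i - j| : ℤ) : ℝ) + 2 * (N : ℝ) = 2 * (k : ℝ) - i - j := by
        exact_mod_cast congrArg (Int.cast : ℤ → ℝ) hNval
      rw [← hkθ]; linear_combination θ * this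
    rw [this, Real.cos_sub, Real.cos_two_pi, Real.sin_two_pi]; ring_nf
  rw [h1, h2, sin_mul_sin',
    show ((i:ℝ) - j) * θ = -((((j:ℝ)+1)*θ) - (((i:ℝ)+1)*θ)) by ring, Real.cos_neg]
  ring_nf
end
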